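/- Let C₀ ⊆ ℝⁿ be closed, d ∈ ℝⁿ, T > 0, and K := {(x,t) ∈ ℝⁿ × ℝ : t ∈ [0,T], x + t·d ∈ C₀}. Let G be the multivalued map whose graph is the closure of the graph of χ ↦ Proj_{T_{C₀}(χ)}(d) (χ ranging over C₀), and let G₁ be the multivalued map whose graph is the closure of the graph of (x,t) ↦ Proj_{T_K(x,t) ∩ (ℝⁿ × {1})}((0_{ℝⁿ},1)) ((x,t) ranging over K). If χ : [0,T] → C₀ is absolutely continuous and satisfies χ̇(t) ∈ G(χ(t)) for almost every t ∈ [0,T], then the function x(t) := χ(t) − t·d satisfies (ẋ(t), 1) ∈ G₁(x(t), t) for almost every t ∈ (0,T). -/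

import Mathlib

/-!
For `0 < t < T`, near `(x, t)` the set `K` is the preimage of `C₀` under the linear surjection
`(y, s) ↦ y + s • d`, so `T_K(x, t)` is the preimage of `T_{C₀}(x + t • d)`. Its slice at height
`1` is the image of `T_{C₀}(x + t • d)` under the isometry `u ↦ (u - d, 1)`, which sends `d` to
`(0, 1)`; hence metric projections correspond. The continuous map
`(χ, v) ↦ ((χ - t • d, t), (v - d, 1))` thus sends the graph of `G` into that of `G₁`, and so
also their closures.
-/

open Set Filter Metric MeasureTheory Topology

noncomputable section

/-- The Bouligand tangent cone to `K` at `y`: vectors `v` for which there are sequences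
`t k → 0⁺` and `w k → v` with `y + t k • w k ∈ K`. -/
def bouligandTangentCone {X : Type*} [NormedAddCommGroup X] [NormedSpace ℝ X]
    (K : Set X) (y : X) : Set X :=
  {v | ∃ t : ℕ → ℝ, ∃ w : ℕ → X,
    (∀ k, 0 < t k) ∧ Tendsto t atTop (𝓝 0) ∧ Tendsto w atTop (𝓝 v) ∧
    ∀ k, y + t k • w k ∈ K}

/-- Proximal normals: `ζ` with `dist (y + t • ζ) K = t * ‖ζ‖` for some `t > 0`. -/
def proxNormalCone {X : Type*} [NormedAddCommGroup X] [NormedSpace ℝ X]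
    (K : Set X) (y : X) : Set X :=
  {ζ | ∃ t : ℝ, 0 < t ∧ infDist (y + t • ζ) K = t * ‖ζ‖}

/-- The cone of limiting normals: limits of proximal normals at nearby points of `K`. -/
def limitingNormalCone {X : Type*} [NormedAddCommGroup X] [NormedSpace ℝ X]
    (K : Set X) (y : X) : Set X :=
  {ζ | ∃ yk : ℕ → X, ∃ ζk : ℕ → X,
    (∀ k, yk k ∈ K) ∧ (∀ k, ζk k ∈ proxNormalCone K (yk k)) ∧
    Tendsto yk atTop (𝓝 y) ∧ Tendsto ζk atTop (𝓝 ζ)}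

/-- Metric projection of `d` onto `A`. -/
def metricProj {X : Type*} [NormedAddCommGroup X] (A : Set X) (d : X) : Set X :=
  {a ∈ A | ‖d - a‖ = infDist d A}

/-- `ℝⁿ` with the Euclidean norm. -/
abbrev En (n : ℕ) := EuclideanSpace ℝ (Fin n)

/-- `ℝⁿ × ℝ` with the Euclidean (L²) norm. -/
abbrev Yn (n : ℕ) := WithLp 2 (En n × ℝ)

/-- The pair `(x, t)` as an element of `ℝⁿ × ℝ`. -/
def toY {n : ℕ} (x : En n) (t : ℝ) : Yn n := (WithLp.equiv 2 (En n × ℝ)).symm (x, t)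

/-- `Pr : ℝⁿ × ℝ → ℝⁿ`, projection on the first `n` coordinates. -/
def PrY {n : ℕ} (y : Yn n) : En n := ((WithLp.equiv 2 (En n × ℝ)) y).1

/-- The last ("time") coordinate of an element of `ℝⁿ × ℝ`. -/
def tY {n : ℕ} (y : Yn n) : ℝ := ((WithLp.equiv 2 (En n × ℝ)) y).2

/-- The hyperplane `ℝⁿ × {1}`. -/
def sliceOne (n : ℕ) : Set (Yn n) := {y | tY y = 1}

/-- `x`, with a.e. derivative `v`, is absolutely continuous on `[0,T]`. -/
def IsAC {X : Type*} [NormedAddCommGroup X] [NormedSpace ℝ X]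
    (x v : ℝ → X) (T : ℝ) : Prop :=
  IntegrableOn v (Icc 0 T) volume ∧ ∀ t ∈ Icc (0:ℝ) T, x t = x 0 + ∫ s in (0:ℝ)..t, v s

section TangentCone

variable {X Y : Type*} [NormedAddCommGroup X] [NormedSpace ℝ X]
  [NormedAddCommGroup Y] [NormedSpace ℝ Y]

lemma bouligandTangentCone_mono {s s' : Set X} (h : s ⊆ s') (y : X) :
    bouligandTangentCone s y ⊆ bouligandTangentCone s' y := by
  rintro v ⟨τ, w, hτpos, hτ, hw, hmem⟩
  exact ⟨τ, w, hτpos, hτ, hw, fun k => h (hmem k)⟩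

lemma bouligandTangentCone_inter_of_mem_nhds {s U : Set X} {y : X} (hU : U ∈ 𝓝 y) :
    bouligandTangentCone (s ∩ U) y = bouligandTangentCone s y := by
  refine (bouligandTangentCone_mono inter_subset_left y).antisymm ?_
  rintro v ⟨τ, w, hτpos, hτ, hw, hmem⟩
  have hnear : Tendsto (fun k => y + τ k • w k) atTop (𝓝 y) := by
    simpa using tendsto_const_nhds.add (hτ.smul hw)
  obtain ⟨N, hN⟩ := eventually_atTop.1 (hnear hU)
  exact ⟨fun k => τ (k + N), fun k => w (k + N), fun k => hτpos _,
    (tendsto_add_atTop_iff_nat N).2 hτ, (tendsto_add_atTop_iff_nat N).2 hw,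
    fun k => ⟨hmem _, hN _ (Nat.le_add_left N k)⟩⟩

lemma bouligandTangentCone_preimage (L : X →L[ℝ] Y) (S : Y →L[ℝ] X) (hLS : ∀ u, L (S u) = u)
    (C : Set Y) (y : X) :
    bouligandTangentCone (L ⁻¹' C) y = L ⁻¹' bouligandTangentCone C (L y) := by
  ext v
  constructor
  · rintro ⟨τ, w, hτpos, hτ, hw, hmem⟩
    refine ⟨τ, fun k => L (w k), hτpos, hτ, (L.continuous.tendsto v).comp hw, fun k => ?_⟩
    simpa using hmem k
  · rintro ⟨τ, u, hτpos, hτ, hu, hmem⟩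
    -- lift `u k → L v` to `w k → v` with `L (w k) = u k`
    refine ⟨τ, fun k => v + S (u k - L v), hτpos, hτ, ?_, fun k => ?_⟩
    · simpa using tendsto_const_nhds.add ((S.continuous.tendsto _).comp (hu.sub_const (L v)))
    · simpa [hLS, ← smul_add] using hmem k

end TangentCone

lemma Isometry.mem_metricProj_image {X Y : Type*} [NormedAddCommGroup X] [NormedAddCommGroup Y]
    {Φ : X → Y} (hΦ : Isometry Φ) {A : Set X} {d a : X} (ha : a ∈ metricProj A d) :
    Φ a ∈ metricProj (Φ '' A) (Φ d) := by
  refine ⟨mem_image_of_mem Φ ha.1, ?_⟩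
  rw [← dist_eq_norm, hΦ.dist_eq, dist_eq_norm, ha.2, infDist_image hΦ]

section Slice

variable {n : ℕ}

lemma continuous_toY : Continuous (fun p : En n × ℝ => toY p.1 p.2) :=
  (WithLp.prodContinuousLinearEquiv 2 ℝ (En n) ℝ).symm.continuous

lemma continuous_tY : Continuous (tY (n := n)) :=
  continuous_snd.comp (WithLp.prodContinuousLinearEquiv 2 ℝ (En n) ℝ).continuous

def shearY (d : En n) : Yn n →L[ℝ] En n :=
  (ContinuousLinearMap.fst ℝ (En n) ℝ + (ContinuousLinearMap.snd ℝ (En n) ℝ).smulRight d).comp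
    (WithLp.prodContinuousLinearEquiv 2 ℝ (En n) ℝ).toContinuousLinearMap

lemma shearY_apply (d : En n) (y : Yn n) : shearY d y = PrY y + tY y • d := rfl

lemma bouligandTangentCone_eq_preimage_shearY {C₀ : Set (En n)} {d : En n} {T : ℝ} {K : Set (Yn n)}
    (hK : K = {y | tY y ∈ Icc (0:ℝ) T ∧ PrY y + tY y • d ∈ C₀})
    {t : ℝ} (ht : t ∈ Ioo (0:ℝ) T) (x : En n) :
    bouligandTangentCone K (toY x t)
      = shearY d ⁻¹' bouligandTangentCone C₀ (x + t • d) := by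
  have hKloc : K ∩ tY ⁻¹' Ioo 0 T = shearY d ⁻¹' C₀ ∩ tY ⁻¹' Ioo 0 T := by
    ext y
    simp only [hK, mem_inter_iff, mem_ofPred_eq, mem_preimage, shearY_apply]
    constructor
    · exact fun h => ⟨h.1.2, h.2⟩
    · exact fun h => ⟨⟨Ioo_subset_Icc_self h.2, h.1⟩, h.2⟩
  have hU : tY ⁻¹' Ioo 0 T ∈ 𝓝 (toY x t) := (isOpen_Ioo.preimage continuous_tY).mem_nhds ht
  let S : En n →L[ℝ] Yn n :=
    (WithLp.prodContinuousLinearEquiv 2 ℝ (En n) ℝ).symm.toContinuousLinearMap.comp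
      (ContinuousLinearMap.inl ℝ (En n) ℝ)
  rw [← bouligandTangentCone_inter_of_mem_nhds hU, hKloc,
    bouligandTangentCone_inter_of_mem_nhds hU,
    bouligandTangentCone_preimage (shearY d) S (fun u => by simp [S, shearY_apply, PrY, tY])]
  rfl

lemma isometry_toY_sub_one (d : En n) : Isometry fun u : En n => toY (u - d) 1 := by
  refine Isometry.of_dist_eq fun u w => ?_
  rw [dist_eq_norm, dist_eq_norm, WithLp.prod_norm_eq_of_L2]
  show √(‖u - d - (w - d)‖ ^ 2 + ‖(1:ℝ) - 1‖ ^ 2) = ‖u - w‖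
  simp

lemma bouligandTangentCone_inter_sliceOne {C₀ : Set (En n)} {d : En n} {T : ℝ} {K : Set (Yn n)}
    (hK : K = {y | tY y ∈ Icc (0:ℝ) T ∧ PrY y + tY y • d ∈ C₀})
    {t : ℝ} (ht : t ∈ Ioo (0:ℝ) T) (x : En n) :
    bouligandTangentCone K (toY x t) ∩ sliceOne n
      = (fun u => toY (u - d) 1) '' bouligandTangentCone C₀ (x + t • d) := by
  rw [bouligandTangentCone_eq_preimage_shearY hK ht]
  ext y
  constructor
  · rintro ⟨hy, hy1 : tY y = 1⟩
    refine ⟨shearY d y, hy, ?_⟩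
    show toY (PrY y + tY y • d - d) 1 = y
    rw [hy1, one_smul, add_sub_cancel_right, ← hy1]
    rfl
  · rintro ⟨u, hu, rfl⟩
    refine ⟨?_, rfl⟩
    show u - d + (1:ℝ) • d ∈ bouligandTangentCone C₀ (x + t • d)
    simpa using hu

end Slice

lemma toY_sub_one_mem_metricProj {n : ℕ} {C₀ : Set (En n)} {d : En n} {T : ℝ}
    {K : Set (Yn n)} (hK : K = {y | tY y ∈ Icc (0:ℝ) T ∧ PrY y + tY y • d ∈ C₀})
    {t : ℝ} (ht : t ∈ Ioo (0:ℝ) T) {p u : En n}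
    (hu : u ∈ metricProj (bouligandTangentCone C₀ p) d) :
    toY (u - d) 1 ∈ metricProj
      (bouligandTangentCone K (toY (p - t • d) t) ∩ sliceOne n) (toY 0 1) := by
  rw [bouligandTangentCone_inter_sliceOne hK ht, sub_add_cancel]
  simpa using (isometry_toY_sub_one d).mem_metricProj_image hu

theorem statement10_general (n : ℕ) (C₀ : Set (En n)) (d : En n) (T : ℝ)
    (K : Set (Yn n))
    (hK : K = {y | tY y ∈ Icc (0:ℝ) T ∧ PrY y + tY y • d ∈ C₀})
    (χ v : ℝ → En n)
    (hsol : ∀ᵐ t ∂(volume.restrict (Icc (0:ℝ) T)),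
      (χ t, v t) ∈ closure {p : En n × En n |
        p.1 ∈ C₀ ∧ p.2 ∈ metricProj (bouligandTangentCone C₀ p.1) d}) :
    ∀ᵐ t ∂(volume.restrict (Ioo (0:ℝ) T)),
      (toY (χ t - t • d) t, toY (v t - d) 1) ∈ closure {q : Yn n × Yn n |
        q.1 ∈ K ∧
        q.2 ∈ metricProj (bouligandTangentCone K q.1 ∩ sliceOne n) (toY 0 1)} := by
  filter_upwards [ae_restrict_of_ae_restrict_of_subset Ioo_subset_Icc_self hsol,
    ae_restrict_mem measurableSet_Ioo] with t hgraph ht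
  let Ψ : En n × En n → Yn n × Yn n := fun p => (toY (p.1 - t • d) t, toY (p.2 - d) 1)
  have hΨ : Continuous Ψ :=
    (continuous_toY.comp ((continuous_fst.sub continuous_const).prodMk continuous_const)).prodMk
      (continuous_toY.comp ((continuous_snd.sub continuous_const).prodMk continuous_const))
  have hmaps : MapsTo Ψ
      {p | p.1 ∈ C₀ ∧ p.2 ∈ metricProj (bouligandTangentCone C₀ p.1) d}
      {q | q.1 ∈ K ∧ q.2 ∈ metricProj (bouligandTangentCone K q.1 ∩ sliceOne n) (toY 0 1)} := by
    rintro ⟨p, u⟩ ⟨hp, hu⟩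
    refine ⟨?_, toY_sub_one_mem_metricProj hK ht hu⟩
    rw [hK]
    exact ⟨Ioo_subset_Icc_self ht, show p - t • d + t • d ∈ C₀ by rwa [sub_add_cancel]⟩
  exact hmaps.closure hΨ hgraph

/-- Let `K = {(x,t) : t ∈ [0,T], x + t·d ∈ C₀}`, let `G` be the closure of
the graph of `χ ↦ Proj_{T_{C₀}(χ)}(d)` on `C₀`, and `G₁` the closure of the graph of
`(x,t) ↦ Proj_{T_K(x,t) ∩ (ℝⁿ × {1})}((0,1))` on `K`. If the absolutely continuous curve `χ`
stays in `C₀` and satisfies `χ̇(t) ∈ G(χ(t))` a.e. on `[0,T]`, then `x(t) := χ(t) - t·d`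
satisfies `(ẋ(t),1) ∈ G₁(x(t),t)` a.e. on `(0,T)`. -/
theorem statement10 (n : ℕ) (C₀ : Set (En n)) (hC₀ : IsClosed C₀) (d : En n) (T : ℝ)
    (hT : 0 < T) (K : Set (Yn n))
    (hK : K = {y | tY y ∈ Icc (0:ℝ) T ∧ PrY y + tY y • d ∈ C₀})
    (χ v : ℝ → En n) (hAC : IsAC χ v T) (hmem : ∀ t ∈ Icc (0:ℝ) T, χ t ∈ C₀)
    (hsol : ∀ᵐ t ∂(volume.restrict (Icc (0:ℝ) T)),
      (χ t, v t) ∈ closure {p : En n × En n |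
        p.1 ∈ C₀ ∧ p.2 ∈ metricProj (bouligandTangentCone C₀ p.1) d}) :
    ∀ᵐ t ∂(volume.restrict (Ioo (0:ℝ) T)),
      (toY (χ t - t • d) t, toY (v t - d) 1) ∈ closure {q : Yn n × Yn n |
        q.1 ∈ K ∧
        q.2 ∈ metricProj (bouligandTangentCone K q.1 ∩ sliceOne n) (toY 0 1)} :=
  statement10_general n C₀ d T K hK χ v hsol
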